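/- arXiv:2106.07170 — 12 statements merged into one kernel-verified Lean document; each statement's English description precedes it below -/
import Mathlib

section
/- Let X be a quasi-compact topological space and Φ a finitary system of supports in X (i.e., every member of Φ is contained in a member Z of Φ such that X∖Z is retrocompact in X). If (Z_δ)_{δ∈D} is a family of closed subsets of X such that the intersection ⋂_{δ∈D} Z_δ belongs to Φ, then there is a finite subset D₀ ⊆ D such that ⋂_{δ∈D₀} Z_δ belongs to Φ. -/
/-- A system of supports in a topological space `X`: a nonempty set `Φ` of closed subsets
of `X` such that any closed subset of any finite union of members of `Φ` belongs to `Φ`. -/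
def IsSOS {X : Type*} [TopologicalSpace X] (Φ : Set (Set X)) : Prop :=
  Φ.Nonempty ∧ (∀ Z ∈ Φ, IsClosed Z) ∧
    ∀ s : Finset (Set X), ↑s ⊆ Φ → ∀ C : Set X, IsClosed C → C ⊆ ⋃ Z ∈ s, Z → C ∈ Φ

/-- `Φ` is finitary: every member of `Φ` is contained in a member `Z` such that
`X ∖ Z` is retrocompact in `X`. -/
def FinitarySOS {X : Type*} [TopologicalSpace X] (Φ : Set (Set X)) : Prop :=
  ∀ W ∈ Φ, ∃ Z ∈ Φ, W ⊆ Z ∧ ∀ U : Set X, IsOpen U → IsCompact U → IsCompact (U \ Z)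

/-!
A member `W ⊇ ⋂ Z_δ` of `Φ` with retrocompact complement has a quasi-compact complement,
since `X` itself is quasi-compact. The open sets `X ∖ Z_δ` cover it, so finitely many do,
i.e. `⋂_{δ ∈ D₀} Z_δ ⊆ W` for a finite `D₀`; being closed, this intersection lies in `Φ`.
-/

theorem IsSOS.mem_of_isClosed_of_subset {X : Type*} [TopologicalSpace X] {Φ : Set (Set X)}
    (hΦ : IsSOS Φ) {W C : Set X} (hW : W ∈ Φ) (hC : IsClosed C) (hCW : C ⊆ W) : C ∈ Φ :=
  hΦ.2.2 {W} (by simpa using hW) C hC (by simpa using hCW)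

theorem exists_finset_biInter_subset_of_isCompact_compl {X D : Type*} [TopologicalSpace X]
    {Z : D → Set X} (hZ : ∀ d, IsClosed (Z d)) {W : Set X} (hW : IsCompact Wᶜ)
    (hZW : ⋂ d, Z d ⊆ W) : ∃ D₀ : Finset D, ⋂ d ∈ D₀, Z d ⊆ W := by
  obtain ⟨D₀, hD₀⟩ := hW.elim_finite_subfamily_closed Z hZ <| by
    rwa [← Set.disjoint_iff_inter_eq_empty, Set.disjoint_compl_left_iff_subset]
  rw [← Set.disjoint_iff_inter_eq_empty, Set.disjoint_compl_left_iff_subset] at hD₀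
  exact ⟨D₀, hD₀⟩

theorem stmt0 {X : Type*} [TopologicalSpace X] [CompactSpace X]
    (Φ : Set (Set X)) (hΦ : IsSOS Φ) (hfin : FinitarySOS Φ)
    {D : Type*} (Z : D → Set X) (hZ : ∀ d, IsClosed (Z d))
    (h : (⋂ d, Z d) ∈ Φ) :
    ∃ D₀ : Finset D, (⋂ d ∈ D₀, Z d) ∈ Φ := by
  obtain ⟨W, hWΦ, hZW, hretro⟩ := hfin _ h
  have hW : IsCompact Wᶜ := by
    simpa [Set.compl_eq_univ_sdiff] using hretro Set.univ isOpen_univ isCompact_univ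
  obtain ⟨D₀, hD₀⟩ := exists_finset_biInter_subset_of_isCompact_compl hZ hW hZW
  exact ⟨D₀, hΦ.mem_of_isClosed_of_subset hWΦ (isClosed_biInter fun d _ => hZ d) hD₀⟩
end

section
/- Let X be a noetherian topological space in which every irreducible closed subset is the closure of one of its points. Then every system of supports in X equals Φ_Y for a unique specialization-stable subset Y ⊆ X, where Φ_Y consists of all subsets of Y closed in X. -/
/-- `Y` is specialization-stable: it contains the closure of each of its points. -/
def SpecStable {X : Type*} [TopologicalSpace X] (Y : Set X) : Prop :=
  ∀ y ∈ Y, closure {y} ⊆ Y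

/-!
Take `Y` to be the union of the members of `Φ`; it is specialization-stable because the members
are closed. A closed `C ⊆ Y` is a finite union of irreducible closed sets (noetherianity), each of
which is the closure of a point of `Y` and hence lies in a single member of `Φ`; so `C` is a closed
subset of a finite union of members of `Φ`. Uniqueness holds because a specialization-stable set
is the union of the closures of its points.
-/

open Set TopologicalSpace

section SpecStable

variable {X : Type*} [TopologicalSpace X]

theorem specStable_sUnion {𝒮 : Set (Set X)} (h𝒮 : ∀ Z ∈ 𝒮, IsClosed Z) :
    SpecStable (⋃₀ 𝒮) := by
  rintro y ⟨Z, hZ, hyZ⟩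
  exact ((h𝒮 Z hZ).closure_subset_iff.2 (singleton_subset_iff.2 hyZ)).trans
    (subset_sUnion_of_mem hZ)

theorem SpecStable.sUnion_isClosed_subset {Y : Set X} (hY : SpecStable Y) :
    ⋃₀ {Z : Set X | IsClosed Z ∧ Z ⊆ Y} = Y :=
  (sUnion_subset fun _ hZ ↦ hZ.2).antisymm fun y hy ↦
    ⟨closure {y}, ⟨isClosed_closure, hY y hy⟩, subset_closure rfl⟩

end SpecStable

namespace IsSOS

variable {X : Type*} [TopologicalSpace X] {Φ : Set (Set X)}

theorem isClosed_of_mem (hΦ : IsSOS Φ) {Z : Set X} (hZ : Z ∈ Φ) : IsClosed Z :=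
  hΦ.2.1 Z hZ

theorem mem_of_subset_sUnion_of_finite (hΦ : IsSOS Φ) {T : Set (Set X)} (hT : T.Finite)
    (hTΦ : T ⊆ Φ) {C : Set X} (hC : IsClosed C) (hCT : C ⊆ ⋃₀ T) : C ∈ Φ := by
  lift T to Finset (Set X) using hT
  exact hΦ.2.2 T hTΦ C hC (hCT.trans sUnion_eq_biUnion.subset)

theorem mem_of_subset_sUnion_of_forall_exists (hΦ : IsSOS Φ) {S : Set (Set X)} (hS : S.Finite)
    (hSΦ : ∀ t ∈ S, ∃ W ∈ Φ, t ⊆ W) {C : Set X} (hC : IsClosed C) (hCS : C ⊆ ⋃₀ S) :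
    C ∈ Φ := by
  choose! W hWΦ htW using hSΦ
  refine hΦ.mem_of_subset_sUnion_of_finite (hS.image W) (image_subset_iff.2 hWΦ) hC ?_
  exact hCS.trans fun x ⟨t, ht, hxt⟩ ↦ ⟨W t, mem_image_of_mem W ht, htW t ht hxt⟩

theorem exists_mem_superset_of_isGenericPoint (hΦ : IsSOS Φ) {x : X} {t : Set X}
    (hx : IsGenericPoint x t) (ht : t ⊆ ⋃₀ Φ) : ∃ W ∈ Φ, t ⊆ W := by
  obtain ⟨W, hWΦ, hxW⟩ := ht hx.mem
  exact ⟨W, hWΦ, (hx.mem_closed_set_iff (hΦ.isClosed_of_mem hWΦ)).1 hxW⟩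

theorem mem_of_isClosed_of_subset_sUnion [NoetherianSpace X] [QuasiSober X] (hΦ : IsSOS Φ)
    {C : Set X} (hC : IsClosed C) (hCΦ : C ⊆ ⋃₀ Φ) : C ∈ Φ := by
  obtain ⟨S, hS, hSclosed, hSirr, rfl⟩ :=
    NoetherianSpace.exists_finite_set_isClosed_irreducible hC
  refine hΦ.mem_of_subset_sUnion_of_forall_exists hS (fun t ht ↦ ?_) hC subset_rfl
  obtain ⟨x, hx⟩ := QuasiSober.sober (hSirr t ht) (hSclosed t ht)
  exact hΦ.exists_mem_superset_of_isGenericPoint hx ((subset_sUnion_of_mem ht).trans hCΦ)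

theorem eq_setOf_isClosed_subset_sUnion [NoetherianSpace X] [QuasiSober X] (hΦ : IsSOS Φ) :
    Φ = {Z : Set X | IsClosed Z ∧ Z ⊆ ⋃₀ Φ} :=
  Subset.antisymm (fun Z hZ ↦ ⟨hΦ.isClosed_of_mem hZ, subset_sUnion_of_mem hZ⟩)
    fun _ hZ ↦ hΦ.mem_of_isClosed_of_subset_sUnion hZ.1 hZ.2

end IsSOS

theorem stmt2 {X : Type*} [TopologicalSpace X] [TopologicalSpace.NoetherianSpace X]
    (hsober : ∀ T : Set X, IsClosed T → IsIrreducible T → ∃ x ∈ T, closure {x} = T)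
    (Φ : Set (Set X)) (hΦ : IsSOS Φ) :
    ∃! Y : Set X, SpecStable Y ∧ Φ = {Z : Set X | IsClosed Z ∧ Z ⊆ Y} := by
  have : QuasiSober X := ⟨fun hirr hcl ↦
    let ⟨x, _, hx⟩ := hsober _ hcl hirr
    ⟨x, hx⟩⟩
  refine ⟨⋃₀ Φ,
    ⟨specStable_sUnion fun _ ↦ hΦ.isClosed_of_mem, hΦ.eq_setOf_isClosed_subset_sUnion⟩, ?_⟩
  rintro Y ⟨hY, rfl⟩
  exact hY.sUnion_isClosed_subset.symm
end

section
/- Let X be a topological space that is a union of quasi-compact open subsets. Then the following are equivalent: (1) every system of supports in X is finitary; (2) every quasi-compact open subset of X is noetherian; (3) every open subset of X is retrocompact in X; (4) X is locally noetherian (every point has a noetherian neighborhood). -/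
/-! Every quasi-compact open being noetherian is the same as every open set being retrocompact,
and since a noetherian space is one all of whose subsets are quasi-compact, both are local
properties once `X` is covered by quasi-compact opens. For the systems of supports: if every
closed set has retrocompact complement, each member of `Φ` is its own witness of finitarity;
conversely the closed subsets of `X ∖ U` form a system of supports whose largest member is
`X ∖ U` itself, so finitarity forces `U` to be retrocompact. -/

open Set TopologicalSpace Topology

section

variable {X : Type*} [TopologicalSpace X]

theorem isSOS_setOf_isClosed_subset (F : Set X) : IsSOS {C | IsClosed C ∧ C ⊆ F} := by
  refine ⟨⟨∅, isClosed_empty, empty_subset F⟩, fun Z hZ => hZ.1, fun s hs C hC hCs => ⟨hC, ?_⟩⟩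
  exact hCs.trans (iUnion₂_subset fun Z hZ => (hs hZ).2)

theorem IsOpen.isCompact_inter_of_finitarySOS {U : Set X} (hU : IsOpen U)
    (h : FinitarySOS {C | IsClosed C ∧ C ⊆ Uᶜ}) (V : Set X) (hV : IsOpen V) (hVc : IsCompact V) :
    IsCompact (V ∩ U) := by
  obtain ⟨Z, hZ, hUZ, hZV⟩ := h Uᶜ ⟨hU.isClosed_compl, subset_rfl⟩
  have hZU : Z = Uᶜ := hZ.2.antisymm hUZ
  simpa [hZU, sdiff_compl] using hZV V hV hVc

theorem noetherianSpace_of_forall_isOpen_isCompact_inter {U : Set X}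
    (h : ∀ V : Set X, IsOpen V → IsCompact (U ∩ V)) : NoetherianSpace U := by
  refine (noetherianSpace_iff_opens U).2 fun s => ?_
  obtain ⟨V, hV, hVs⟩ := isOpen_induced_iff.1 s.isOpen
  rw [IsEmbedding.subtypeVal.isCompact_iff, ← hVs, Subtype.image_preimage_coe]
  exact h V hV

theorem IsCompact.noetherianSpace_of_forall_mem_nhds {K : Set X} (hK : IsCompact K)
    (h : ∀ x ∈ K, ∃ N ∈ 𝓝 x, NoetherianSpace N) : NoetherianSpace K := by
  choose N hN hNoeth using h
  obtain ⟨t, hKt⟩ := hK.elim_nhds_subcover' N hN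
  refine (noetherianSpace_set_iff K).2 fun s hs => ?_
  have hs_eq : s = ⋃ x ∈ t, s ∩ N x x.2 := by
    rw [← inter_iUnion₂, inter_eq_left.2 (hs.trans hKt)]
  rw [hs_eq]
  exact t.isCompact_biUnion fun x _ =>
    (noetherianSpace_set_iff _).1 (hNoeth x x.2) _ inter_subset_right

end

theorem stmt3 {X : Type*} [TopologicalSpace X]
    (hX : ∀ x : X, ∃ U : Set X, IsOpen U ∧ IsCompact U ∧ x ∈ U) :
    List.TFAE [
      ∀ Φ : Set (Set X), IsSOS Φ → FinitarySOS Φ,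
      ∀ U : Set X, IsOpen U → IsCompact U → TopologicalSpace.NoetherianSpace U,
      ∀ U : Set X, IsOpen U → ∀ V : Set X, IsOpen V → IsCompact V → IsCompact (V ∩ U),
      ∀ x : X, ∃ N ∈ nhds x, TopologicalSpace.NoetherianSpace N
    ] := by
  tfae_have 1 → 3 := fun h1 U hU =>
    hU.isCompact_inter_of_finitarySOS (h1 _ (isSOS_setOf_isClosed_subset Uᶜ))
  tfae_have 3 → 1 := fun h3 Φ hΦ W hW => ⟨W, hW, subset_rfl, fun V hV hVc =>
    Set.sdiff_eq (s := V) (t := W) ▸ h3 Wᶜ (hΦ.2.1 W hW).isOpen_compl V hV hVc⟩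
  tfae_have 3 → 2 := fun h3 U hU hUc =>
    noetherianSpace_of_forall_isOpen_isCompact_inter fun V hV => h3 V hV U hU hUc
  tfae_have 2 → 3 := fun h2 U _ V hV hVc =>
    (noetherianSpace_set_iff V).1 (h2 V hV hVc) _ inter_subset_left
  tfae_have 2 → 4 := fun h2 x => by
    obtain ⟨U, hU, hUc, hxU⟩ := hX x
    exact ⟨U, hU.mem_nhds hxU, h2 U hU hUc⟩
  tfae_have 4 → 2 := fun h4 U _ hUc => hUc.noetherianSpace_of_forall_mem_nhds fun x _ => h4 x
  tfae_finish
end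

section
/- Let (A, α) be an idempotent pair in a symmetric monoidal category D. Then the symmetry automorphism s_{A,A} : A ⊗ A → A ⊗ A is the identity map. -/
open CategoryTheory MonoidalCategory

/-- `(A, α)` is an idempotent pair: `r_A ∘ (1_A ⊗ α)` and `l_A ∘ (α ⊗ 1_A)` are equal
isomorphisms from `A ⊗ A` to `A`. -/
def IsIdempotentPair {D : Type*} [CategoryTheory.Category D]
    [CategoryTheory.MonoidalCategory D] {A : D}
    (α : A ⟶ 𝟙_ D) : Prop :=
  CategoryTheory.MonoidalCategory.whiskerLeft A α ≫ (ρ_ A).hom =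
      CategoryTheory.MonoidalCategory.whiskerRight α A ≫ (λ_ A).hom ∧
    CategoryTheory.IsIso (CategoryTheory.MonoidalCategory.whiskerRight α A ≫ (λ_ A).hom)

theorem braiding_hom_whiskerRight_leftUnitor {C : Type*} [Category C] [MonoidalCategory C]
    [BraidedCategory C] {X Y : C} (f : X ⟶ 𝟙_ C) :
    (β_ Y X).hom ≫ f ▷ Y ≫ (λ_ Y).hom = Y ◁ f ≫ (ρ_ Y).hom := by
  rw [← Category.assoc, ← BraidedCategory.braiding_naturality_right, Category.assoc,
    braiding_leftUnitor]

theorem stmt8 {D : Type*} [Category D] [MonoidalCategory D] [SymmetricCategory D]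
    {A : D} (α : A ⟶ 𝟙_ D) (h : IsIdempotentPair α) :
    (β_ A A).hom = 𝟙 (A ⊗ A) := by
  obtain ⟨h_eq, h_iso⟩ := h
  rw [← cancel_mono (α ▷ A ≫ (λ_ A).hom), braiding_hom_whiskerRight_leftUnitor, h_eq,
    Category.id_comp]
end

section
/- Let D be a symmetric monoidal category with unit O and let α : A → O be a morphism. Then (A, α) is an idempotent pair if and only if for all objects F, G of D the composite map Hom(A ⊗ F, A ⊗ G) → Hom(A ⊗ F, O ⊗ G) → Hom(A ⊗ F, G), given by postcomposition with α ⊗ 1_G followed by the left unitor l_G, is a bijection. -/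
/-!
Write `φ = l_A ∘ (α ⊗ 1_A) : A ⊗ A → A` and `a` for the associator. Both `l_{A ⊗ X} ∘ (α ⊗ 1)` and
`1_A ⊗ (l_X ∘ (α ⊗ 1))` kill one copy of `A` in `A ⊗ (A ⊗ X)`; up to `a` they are `φ ⊗ 1_X` and
`(r_A ∘ (1_A ⊗ α)) ⊗ 1_X`, so they agree for an idempotent pair. Consequently
`f ∘ (φ ⊗ 1_F) = (1_A ⊗ Φ f) ∘ a` for the map `Φ` of the statement, and
`g ↦ (1_A ⊗ g) ∘ a ∘ (φ⁻¹ ⊗ 1_F)` inverts `Φ`. Conversely, surjectivity of `Φ` at `(O, A)` gives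
a section of `φ`, injectivity at `(A, A)` makes it a two-sided inverse, and injectivity at
`(A, O)` identifies `1_A ⊗ α` with `r_A⁻¹ ∘ φ`.
-/

open CategoryTheory MonoidalCategory

section

variable {D : Type*} [Category D] [MonoidalCategory D] {A : D} (α : A ⟶ 𝟙_ D)

lemma associator_hom_whiskerRight_leftUnitor (X : D) :
    (α_ A A X).hom ≫ α ▷ (A ⊗ X) ≫ (λ_ (A ⊗ X)).hom = (α ▷ A ≫ (λ_ A).hom) ▷ X := by
  rw [← associator_naturality_left_assoc]
  simp [comp_whiskerRight]

lemma associator_hom_whiskerLeft_leftUnitor (X : D) :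
    (α_ A A X).hom ≫ A ◁ (α ▷ X ≫ (λ_ X).hom) = (A ◁ α ≫ (ρ_ A).hom) ▷ X := by
  simp only [MonoidalCategory.whiskerLeft_comp, ← associator_naturality_middle_assoc]
  simp [comp_whiskerRight]

lemma whiskerRight_leftUnitor_eq_whiskerLeft
    (h : A ◁ α ≫ (ρ_ A).hom = α ▷ A ≫ (λ_ A).hom) (X : D) :
    α ▷ (A ⊗ X) ≫ (λ_ (A ⊗ X)).hom = A ◁ (α ▷ X ≫ (λ_ X).hom) := by
  rw [← cancel_epi (α_ A A X).hom, associator_hom_whiskerRight_leftUnitor,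
    associator_hom_whiskerLeft_leftUnitor, h]

lemma associator_hom_whiskerLeft_comp_whiskerRight_leftUnitor {F G : D} (g : A ⊗ F ⟶ G) :
    (α_ A A F).hom ≫ A ◁ g ≫ α ▷ G ≫ (λ_ G).hom = (α ▷ A ≫ (λ_ A).hom) ▷ F ≫ g := by
  rw [whisker_exchange_assoc, leftUnitor_naturality,
    reassoc_of% associator_hom_whiskerRight_leftUnitor]

lemma whiskerRight_comp_eq_associator_hom_whiskerLeft
    (h : A ◁ α ≫ (ρ_ A).hom = α ▷ A ≫ (λ_ A).hom) {F G : D} (f : A ⊗ F ⟶ A ⊗ G) :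
    (α ▷ A ≫ (λ_ A).hom) ▷ F ≫ f = (α_ A A F).hom ≫ A ◁ (f ≫ α ▷ G ≫ (λ_ G).hom) := by
  rw [← associator_hom_whiskerRight_leftUnitor, Category.assoc, Category.assoc,
    ← leftUnitor_naturality, ← whisker_exchange_assoc,
    whiskerRight_leftUnitor_eq_whiskerLeft α h]
  simp only [MonoidalCategory.whiskerLeft_comp]

theorem IsIdempotentPair.bijective_comp_whiskerRight_leftUnitor (h : IsIdempotentPair α)
    (F G : D) :
    Function.Bijective (fun f : A ⊗ F ⟶ A ⊗ G => f ≫ α ▷ G ≫ (λ_ G).hom) := by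
  obtain ⟨hEq, hIso⟩ := h
  refine Function.bijective_iff_has_inverse.2
    ⟨fun g => inv (α ▷ A ≫ (λ_ A).hom) ▷ F ≫ (α_ A A F).hom ≫ A ◁ g, fun f => ?_, fun g => ?_⟩
  · simp only
    rw [← whiskerRight_comp_eq_associator_hom_whiskerLeft α hEq, ← comp_whiskerRight_assoc,
      IsIso.inv_hom_id, id_whiskerRight, Category.id_comp]
  · simp only [Category.assoc]
    rw [associator_hom_whiskerLeft_comp_whiskerRight_leftUnitor, ← comp_whiskerRight_assoc,
      IsIso.inv_hom_id, id_whiskerRight, Category.id_comp]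

lemma isIso_whiskerRight_leftUnitor_of_bijective {α : A ⟶ 𝟙_ D} (hα : ∀ F G : D,
    Function.Bijective (fun f : A ⊗ F ⟶ A ⊗ G => f ≫ α ▷ G ≫ (λ_ G).hom)) :
    IsIso (α ▷ A ≫ (λ_ A).hom) := by
  obtain ⟨s, hs⟩ := (hα (𝟙_ D) A).2 (ρ_ A).hom
  have section_eq : ((ρ_ A).inv ≫ s) ≫ α ▷ A ≫ (λ_ A).hom = 𝟙 A := by
    simp only [Category.assoc] at hs ⊢
    rw [hs, Iso.inv_hom_id]
  refine ⟨(ρ_ A).inv ≫ s, (hα A A).1 ?_, section_eq⟩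
  simp only [Category.assoc] at section_eq ⊢
  rw [section_eq, Category.comp_id, Category.id_comp]

lemma whiskerLeft_rightUnitor_eq_of_bijective {α : A ⟶ 𝟙_ D} (hα : ∀ F G : D,
    Function.Bijective (fun f : A ⊗ F ⟶ A ⊗ G => f ≫ α ▷ G ≫ (λ_ G).hom)) :
    A ◁ α ≫ (ρ_ A).hom = α ▷ A ≫ (λ_ A).hom := by
  have h := (hα A (𝟙_ D)).1
    (a₁ := A ◁ α) (a₂ := (α ▷ A ≫ (λ_ A).hom) ≫ (ρ_ A).inv) (by
    simp only [Category.assoc]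
    rw [whisker_exchange_assoc, leftUnitor_naturality, unitors_equal, rightUnitor_naturality,
      Iso.inv_hom_id_assoc])
  rw [h, Category.assoc, Iso.inv_hom_id, Category.comp_id]

end

theorem stmt9_general {D : Type*} [Category D] [MonoidalCategory D]
    {A : D} (α : A ⟶ 𝟙_ D) :
    IsIdempotentPair α ↔
      ∀ F G : D,
        Function.Bijective
          (fun f : A ⊗ F ⟶ A ⊗ G => f ≫ (α ▷ G) ≫ (λ_ G).hom) :=
  ⟨IsIdempotentPair.bijective_comp_whiskerRight_leftUnitor α,
    fun hα => ⟨whiskerLeft_rightUnitor_eq_of_bijective hα,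
      isIso_whiskerRight_leftUnitor_of_bijective hα⟩⟩

theorem stmt9 {D : Type*} [Category D] [MonoidalCategory D] [SymmetricCategory D]
    {A : D} (α : A ⟶ 𝟙_ D) :
    IsIdempotentPair α ↔
      ∀ F G : D,
        Function.Bijective
          (fun f : A ⊗ F ⟶ A ⊗ G => f ≫ (α ▷ G) ≫ (λ_ G).hom) :=
  stmt9_general α
end

section
/- Let D be a symmetric monoidal category with unit O and let α : A → O be a morphism. Define j_{F,G} : Hom(A ⊗ F, A ⊗ G) → Hom(A ⊗ F, G) as composition with l_G ∘ (α ⊗ 1_G). If j_{A,A} and j_{A,O} are injective and j_{O,A} is surjective, then (A, α) is an idempotent pair. -/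
open CategoryTheory MonoidalCategory

namespace CategoryTheory

theorem isIso_of_comp_eq_id_of_injective_comp {C : Type*} [Category C] {X Y : C}
    (g : X ⟶ Y) (u : Y ⟶ X) (hu : u ≫ g = 𝟙 Y)
    (hg : Function.Injective (fun f : X ⟶ X => f ≫ g)) : IsIso g :=
  ⟨u, hg (by simp only [Category.assoc, hu, Category.comp_id, Category.id_comp]), hu⟩

namespace MonoidalCategory

variable {D : Type*} [Category D] [MonoidalCategory D]

theorem whiskerRight_unit_comp_leftUnitor {X : D} (f : X ⟶ 𝟙_ D) :
    f ▷ 𝟙_ D ≫ (λ_ (𝟙_ D)).hom = (ρ_ X).hom ≫ f := by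
  rw [unitors_equal, rightUnitor_naturality]

theorem whiskerLeft_comp_rightUnitor_comp {X Y : D} (f : X ⟶ 𝟙_ D) (g : Y ⟶ 𝟙_ D) :
    X ◁ g ≫ (ρ_ X).hom ≫ f = f ▷ Y ≫ (λ_ Y).hom ≫ g := by
  rw [← whiskerRight_unit_comp_leftUnitor, whisker_exchange_assoc, unitors_equal,
    ← unitors_equal, leftUnitor_naturality]

end MonoidalCategory

end CategoryTheory

theorem stmt10_general {D : Type*} [Category D] [MonoidalCategory D]
    {A : D} (α : A ⟶ 𝟙_ D)
    (hAA : Function.Injective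
      (fun f : A ⊗ A ⟶ A ⊗ A => f ≫ (α ▷ A) ≫ (λ_ A).hom))
    (hAO : Function.Injective
      (fun f : A ⊗ A ⟶ A ⊗ 𝟙_ D => f ≫ (α ▷ (𝟙_ D)) ≫ (λ_ (𝟙_ D)).hom))
    (hOA : Function.Surjective
      (fun f : A ⊗ 𝟙_ D ⟶ A ⊗ A => f ≫ (α ▷ A) ≫ (λ_ A).hom)) :
    IsIdempotentPair α := by
  obtain ⟨e, he⟩ : ∃ e, e ≫ α ▷ A ≫ (λ_ A).hom = (ρ_ A).hom := hOA _
  have hiso : IsIso (α ▷ A ≫ (λ_ A).hom) :=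
    isIso_of_comp_eq_id_of_injective_comp _ ((ρ_ A).inv ≫ e)
      (by rw [Category.assoc, he, Iso.inv_hom_id]) hAA
  -- both sides become `α ⊗ α` after composing with `j_{A,O}`
  have hwhisker : A ◁ α = (α ▷ A ≫ (λ_ A).hom) ≫ (ρ_ A).inv := hAO <| by
    simp only [whiskerRight_unit_comp_leftUnitor, Category.assoc, Iso.inv_hom_id_assoc,
      whiskerLeft_comp_rightUnitor_comp]
  refine ⟨?_, hiso⟩
  rw [hwhisker, Category.assoc, Iso.inv_hom_id, Category.comp_id]

theorem stmt10 {D : Type*} [Category D] [MonoidalCategory D] [SymmetricCategory D]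
    {A : D} (α : A ⟶ 𝟙_ D)
    (hAA : Function.Injective
      (fun f : A ⊗ A ⟶ A ⊗ A => f ≫ (α ▷ A) ≫ (λ_ A).hom))
    (hAO : Function.Injective
      (fun f : A ⊗ A ⟶ A ⊗ 𝟙_ D => f ≫ (α ▷ (𝟙_ D)) ≫ (λ_ (𝟙_ D)).hom))
    (hOA : Function.Surjective
      (fun f : A ⊗ 𝟙_ D ⟶ A ⊗ A => f ≫ (α ▷ A) ≫ (λ_ A).hom)) :
    IsIdempotentPair α :=
  stmt10_general α hAA hAO hOA
end

section
/- Let (A, α) and (B, β) be idempotent pairs in a symmetric monoidal category D. Then there is at most one morphism λ : B → A with α ∘ λ = β; and such a λ exists if and only if the composite l_B ∘ (α ⊗ 1_B) : A ⊗ B → B is an isomorphism. -/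
/-!
Write `ε_α X = l_X ∘ (α ⊗ 1_X) : A ⊗ X → X` (`leftCounit α`), natural in `X`, and
`ε'_α X = r_X ∘ (1_X ⊗ α)` (`rightCounit α`).
Uniqueness: if `α ∘ λ = β = α ∘ λ'`, then composing `λ ⊗ λ'` with the two equal maps
`ε'_α A = ε_α A` and using naturality gives `λ ∘ ε'_β B = λ' ∘ ε_β B`; as `ε'_β B = ε_β B`
is invertible, `λ = λ'`. If `ε_α B` is invertible, `λ = ε'_β A ∘ (ε_α B)⁻¹` works, since
`α ∘ ε'_β A = β ∘ ε_α B`. Conversely, given `λ`, the map `(λ ⊗ 1_B) ∘ (ε_β B)⁻¹` is a section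
of `ε_α B`, so by naturality `ε_α B` is a retract of `ε_α (A ⊗ B)`, which is invertible
because `ε_α A` is.
-/

open CategoryTheory MonoidalCategory

section

variable {D : Type*} [Category D] [MonoidalCategory D] {A B X : D}

def leftCounit (α : A ⟶ 𝟙_ D) : tensorLeft A ⟶ 𝟭 D :=
  (curriedTensor D).map α ≫ (leftUnitorNatIso D).hom

def rightCounit (α : A ⟶ 𝟙_ D) : tensorRight A ⟶ 𝟭 D :=
  (curriedTensor D).flip.map α ≫ (rightUnitorNatIso D).hom

@[simp]
lemma leftCounit_app (α : A ⟶ 𝟙_ D) (X : D) :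
    (leftCounit α).app X = α ▷ X ≫ (λ_ X).hom := rfl

@[simp]
lemma rightCounit_app (α : A ⟶ 𝟙_ D) (X : D) :
    (rightCounit α).app X = X ◁ α ≫ (ρ_ X).hom := rfl

lemma leftCounit_comp_app (lam : B ⟶ A) (α : A ⟶ 𝟙_ D) (X : D) :
    (leftCounit (lam ≫ α)).app X = lam ▷ X ≫ (leftCounit α).app X := by
  simp

lemma rightCounit_comp_app (lam : B ⟶ A) (α : A ⟶ 𝟙_ D) (X : D) :
    (rightCounit (lam ≫ α)).app X = X ◁ lam ≫ (rightCounit α).app X := by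
  simp

lemma leftCounit_app_tensor (α : A ⟶ 𝟙_ D) (X Y : D) :
    (leftCounit α).app (X ⊗ Y) = (α_ A X Y).inv ≫ (leftCounit α).app X ▷ Y := by
  rw [leftCounit_app, leftCounit_app, leftUnitor_tensor_hom, associator_inv_naturality_left_assoc,
    comp_whiskerRight]

instance {α : A ⟶ 𝟙_ D} [IsIso ((leftCounit α).app X)] (Y : D) :
    IsIso ((leftCounit α).app (X ⊗ Y)) := by
  rw [leftCounit_app_tensor]
  infer_instance

lemma rightCounit_app_comp (α : A ⟶ 𝟙_ D) (β : B ⟶ 𝟙_ D) :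
    (rightCounit β).app A ≫ α = (leftCounit α).app B ≫ β := by
  simp only [rightCounit_app, leftCounit_app, Category.assoc]
  rw [← rightUnitor_naturality α, whisker_exchange_assoc, ← unitors_equal, leftUnitor_naturality]

lemma isIso_leftCounit_app_of_comp_eq_id {α : A ⟶ 𝟙_ D} [IsIso ((leftCounit α).app A)]
    (s : X ⟶ A ⊗ X) (hs : s ≫ (leftCounit α).app X = 𝟙 X) : IsIso ((leftCounit α).app X) :=
  (MorphismProperty.isomorphisms D).of_retract
    ((leftCounit α).retractArrowApp ⟨s, _, hs⟩)
    (inferInstanceAs (IsIso ((leftCounit α).app (A ⊗ X))))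

lemma isIso_leftCounit_app_of_comp_eq {α : A ⟶ 𝟙_ D} {β : B ⟶ 𝟙_ D}
    [IsIso ((leftCounit α).app A)] [IsIso ((leftCounit β).app B)]
    {lam : B ⟶ A} (h : lam ≫ α = β) : IsIso ((leftCounit α).app B) := by
  refine isIso_leftCounit_app_of_comp_eq_id (inv ((leftCounit β).app B) ≫ lam ▷ B) ?_
  rw [Category.assoc, ← leftCounit_comp_app, h, IsIso.inv_hom_id]

lemma comp_eq_of_isIso_leftCounit_app (α : A ⟶ 𝟙_ D) (β : B ⟶ 𝟙_ D)
    [IsIso ((leftCounit α).app B)] :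
    (inv ((leftCounit α).app B) ≫ (rightCounit β).app A) ≫ α = β := by
  rw [Category.assoc, rightCounit_app_comp, IsIso.inv_hom_id_assoc]

lemma eq_of_comp_eq {α : A ⟶ 𝟙_ D} {β : B ⟶ 𝟙_ D}
    (hα : (rightCounit α).app A = (leftCounit α).app A)
    (hβ : (rightCounit β).app B = (leftCounit β).app B) [Epi ((leftCounit β).app B)]
    {lam lam' : B ⟶ A} (h : lam ≫ α = β) (h' : lam' ≫ α = β) : lam = lam' := by
  rw [← cancel_epi ((leftCounit β).app B)]
  calc (leftCounit β).app B ≫ lam = (rightCounit β).app B ≫ lam := by rw [hβ]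
    _ = lam ▷ B ≫ (rightCounit β).app A := ((rightCounit β).naturality lam).symm
    _ = lam ▷ B ≫ A ◁ lam' ≫ (rightCounit α).app A := by rw [← h', rightCounit_comp_app]
    _ = B ◁ lam' ≫ lam ▷ A ≫ (leftCounit α).app A := by rw [hα, whisker_exchange_assoc]
    _ = B ◁ lam' ≫ (leftCounit β).app A := by rw [← h, leftCounit_comp_app]
    _ = (leftCounit β).app B ≫ lam' := (leftCounit β).naturality lam'

end

theorem stmt11_general {D : Type*} [Category D] [MonoidalCategory D]
    {A B : D} (α : A ⟶ 𝟙_ D) (β : B ⟶ 𝟙_ D)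
    (hα : IsIdempotentPair α) (hβ : IsIdempotentPair β) :
    (∀ lam lam' : B ⟶ A, lam ≫ α = β → lam' ≫ α = β → lam = lam') ∧
    ((∃ lam : B ⟶ A, lam ≫ α = β) ↔ IsIso ((α ▷ B) ≫ (λ_ B).hom)) := by
  obtain ⟨hα_eq, hα_iso⟩ := hα
  obtain ⟨hβ_eq, hβ_iso⟩ := hβ
  change IsIso ((leftCounit α).app A) at hα_iso
  change IsIso ((leftCounit β).app B) at hβ_iso
  refine ⟨fun _ _ => eq_of_comp_eq hα_eq hβ_eq, fun ⟨_, h⟩ => isIso_leftCounit_app_of_comp_eq h,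
    fun h => ?_⟩
  change IsIso ((leftCounit α).app B) at h
  exact ⟨_, comp_eq_of_isIso_leftCounit_app α β⟩

theorem stmt11 {D : Type*} [Category D] [MonoidalCategory D] [SymmetricCategory D]
    {A B : D} (α : A ⟶ 𝟙_ D) (β : B ⟶ 𝟙_ D)
    (hα : IsIdempotentPair α) (hβ : IsIdempotentPair β) :
    (∀ lam lam' : B ⟶ A, lam ≫ α = β → lam' ≫ α = β → lam = lam') ∧
    ((∃ lam : B ⟶ A, lam ≫ α = β) ↔ IsIso ((α ▷ B) ≫ (λ_ B).hom)) :=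
  stmt11_general α β hα hβ
end

section
/- Let (C, γ) be an idempotent pair in a symmetric monoidal category D, and let (B, β) be an object of the slice category D/O (β : B → O). Suppose morphisms q : B → C and p : C → B satisfy β ∘ p = γ and p ∘ q = 1_B. Then p is an isomorphism (with inverse q). -/
/-! The action of `γ` on the first factor of `C ⊗ C` is an isomorphism, hence epi, and the
equality of the two actions lets an endomorphism `f` of `C` pass through it as `f ▷ C`. So any
`f` over `O` (i.e. `f ≫ γ = γ`) is the identity; `p ≫ q` is such an endomorphism. -/

open CategoryTheory MonoidalCategory

section

variable {D : Type*} [Category D] [MonoidalCategory D] {C : D} {γ : C ⟶ 𝟙_ D}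

lemma IsIdempotentPair.whiskerRight_leftUnitor_comp (hC : IsIdempotentPair γ) (f : C ⟶ C) :
    (γ ▷ C ≫ (λ_ C).hom) ≫ f = (f ≫ γ) ▷ C ≫ (λ_ C).hom := by
  rw [← hC.1, Category.assoc, ← rightUnitor_naturality, ← Category.assoc, whisker_exchange,
    Category.assoc, hC.1, ← Category.assoc, ← comp_whiskerRight]

lemma IsIdempotentPair.endo_eq_id (hC : IsIdempotentPair γ) {f : C ⟶ C} (hf : f ≫ γ = γ) :
    f = 𝟙 C := by
  have := hC.2
  rw [← cancel_epi (γ ▷ C ≫ (λ_ C).hom), hC.whiskerRight_leftUnitor_comp, hf, Category.comp_id]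

end

theorem stmt12_general {D : Type*} [Category D] [MonoidalCategory D]
    {B C : D} (γ : C ⟶ 𝟙_ D) (hC : IsIdempotentPair γ)
    (β : B ⟶ 𝟙_ D) (q : B ⟶ C) (p : C ⟶ B)
    (h1 : p ≫ β = γ) (h2 : q ≫ p = 𝟙 B) :
    IsIso p ∧ p ≫ q = 𝟙 C := by
  have hpq : p ≫ q = 𝟙 C := by
    refine hC.endo_eq_id ?_
    rw [← h1, Category.assoc, reassoc_of% h2]
  exact ⟨⟨q, hpq, h2⟩, hpq⟩

theorem stmt12 {D : Type*} [Category D] [MonoidalCategory D] [SymmetricCategory D]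
    {B C : D} (γ : C ⟶ 𝟙_ D) (hC : IsIdempotentPair γ)
    (β : B ⟶ 𝟙_ D) (q : B ⟶ C) (p : C ⟶ B)
    (h1 : p ≫ β = γ) (h2 : q ≫ p = 𝟙 B) :
    IsIso p ∧ p ≫ q = 𝟙 C :=
  stmt12_general γ hC β q p h1 h2
end

section
/- Two idempotent pairs (B, β) and (A, α) in a symmetric monoidal category D are isomorphic as objects of the slice category D/O if and only if there exists an isomorphism λ : B ≅ A in D (not necessarily compatible with β and α). -/
open CategoryTheory MonoidalCategory

/-! Since `A ◁ α ≫ ρ_A = α ▷ A ≫ λ_A`, the invertible map `μ_α = A ◁ α ≫ ρ_A` absorbs the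
braiding, so the braiding of `A` with itself is the identity. Consequently any two maps `α γ : A → 𝟙` commute under
`⊗`, which gives `μ_γ ≫ α = μ_α ≫ γ` for `μ_γ = A ◁ γ ≫ ρ_A`. Transporting `β` along an
isomorphism `B ≅ A` to `γ : A → 𝟙` keeps `μ_γ` invertible, and then `μ_α⁻¹ ≫ μ_γ` is an
automorphism of `A` carrying `α` to `γ`. -/

namespace IsIdempotentPair

variable {D : Type*} [Category D] [MonoidalCategory D] {A : D} {α : A ⟶ 𝟙_ D}

theorem isIso_whiskerLeft_comp_rightUnitor (hα : IsIdempotentPair α) :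
    IsIso (A ◁ α ≫ (ρ_ A).hom) :=
  hα.1 ▸ hα.2

theorem braiding_self_eq_id [BraidedCategory D] (hα : IsIdempotentPair α) :
    (β_ A A).hom = 𝟙 (A ⊗ A) := by
  have := hα.isIso_whiskerLeft_comp_rightUnitor
  rw [← cancel_mono (A ◁ α ≫ (ρ_ A).hom), Category.id_comp,
    ← BraidedCategory.braiding_naturality_left_assoc, braiding_rightUnitor, hα.1]

end IsIdempotentPair

section Monoidal

variable {D : Type*} [Category D] [MonoidalCategory D]

theorem whiskerLeft_comp_rightUnitor_of_iso {A B : D} (e : B ≅ A) (β : B ⟶ 𝟙_ D) :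
    A ◁ (e.inv ≫ β) ≫ (ρ_ A).hom = (e.inv ⊗ₘ e.inv) ≫ (B ◁ β ≫ (ρ_ B).hom) ≫ e.hom := by
  simp only [tensorHom_def', MonoidalCategory.whiskerLeft_comp, Category.assoc]
  rw [← whisker_exchange_assoc]
  simp [MonoidalCategory.whiskerRight_id]

theorem isIso_whiskerLeft_comp_rightUnitor_of_iso {A B : D} (e : B ≅ A) (β : B ⟶ 𝟙_ D)
    [IsIso (B ◁ β ≫ (ρ_ B).hom)] : IsIso (A ◁ (e.inv ≫ β) ≫ (ρ_ A).hom) := by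
  rw [whiskerLeft_comp_rightUnitor_of_iso]
  infer_instance

end Monoidal

section Braided

variable {D : Type*} [Category D] [MonoidalCategory D] [BraidedCategory D]

theorem tensorHom_comm_of_braiding_self_eq_id {A : D} (hA : (β_ A A).hom = 𝟙 (A ⊗ A))
    (f g : A ⟶ 𝟙_ D) : f ⊗ₘ g = g ⊗ₘ f := by
  have hunit : (β_ (𝟙_ D) (𝟙_ D)).hom = 𝟙 _ := by
    rw [braiding_tensorUnit_left, unitors_equal, Iso.hom_inv_id]
  simpa [hA, hunit] using BraidedCategory.braiding_naturality f g

theorem whiskerLeft_comp_rightUnitor_comp_comm {A : D} (hA : (β_ A A).hom = 𝟙 (A ⊗ A))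
    (f g : A ⟶ 𝟙_ D) : (A ◁ g ≫ (ρ_ A).hom) ≫ f = (A ◁ f ≫ (ρ_ A).hom) ≫ g := by
  have key := congrArg (· ≫ (ρ_ (𝟙_ D)).hom) (tensorHom_comm_of_braiding_self_eq_id hA f g)
  simpa [tensorHom_def', MonoidalCategory.whiskerRight_id] using key

theorem IsIdempotentPair.exists_iso_hom_comp_eq {A : D} {α : A ⟶ 𝟙_ D}
    (hα : IsIdempotentPair α) (γ : A ⟶ 𝟙_ D) [IsIso (A ◁ γ ≫ (ρ_ A).hom)] :
    ∃ e : A ≅ A, e.hom ≫ α = γ := by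
  have := hα.isIso_whiskerLeft_comp_rightUnitor
  refine ⟨asIso (inv (A ◁ α ≫ (ρ_ A).hom) ≫ A ◁ γ ≫ (ρ_ A).hom), ?_⟩
  rw [asIso_hom, Category.assoc,
    whiskerLeft_comp_rightUnitor_comp_comm hα.braiding_self_eq_id α γ, IsIso.inv_hom_id_assoc]

end Braided

theorem stmt14 {D : Type*} [Category D] [MonoidalCategory D] [SymmetricCategory D]
    {A B : D} (α : A ⟶ 𝟙_ D) (β : B ⟶ 𝟙_ D)
    (hα : IsIdempotentPair α) (hβ : IsIdempotentPair β) :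
    (∃ e : B ≅ A, e.hom ≫ α = β) ↔ Nonempty (B ≅ A) := by
  refine ⟨fun ⟨e, _⟩ => ⟨e⟩, fun ⟨f⟩ => ?_⟩
  have := hβ.isIso_whiskerLeft_comp_rightUnitor
  have := isIso_whiskerLeft_comp_rightUnitor_of_iso f β
  obtain ⟨e, he⟩ := hα.exists_iso_hom_comp_eq (f.inv ≫ β)
  exact ⟨f ≪≫ e, by simp [he]⟩
end

section
/- Let (A, α) and (B, β) be idempotent pairs in a symmetric monoidal category D with unit O, and let μ : O ⊗ O → O be the unitor l_O = r_O. Then the pair (A ⊗ B, μ ∘ (α ⊗ β)) is idempotent. -/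
open CategoryTheory MonoidalCategory

/-!
The interchange isomorphism `tensorμ : (A ⊗ B) ⊗ (A ⊗ B) ≅ (A ⊗ A) ⊗ (B ⊗ B)` turns each of the
two maps `(A ⊗ B) ⊗ (A ⊗ B) → A ⊗ B` attached to the tensored pair into the tensor product of the
corresponding maps for `(A, α)` and `(B, β)`, so equality and invertibility pass to `A ⊗ B`.
-/

section Braided

variable {C : Type*} [Category C] [MonoidalCategory C] [BraidedCategory C]

instance isIso_tensorμ (X₁ X₂ Y₁ Y₂ : C) : IsIso (tensorμ X₁ X₂ Y₁ Y₂) :=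
  ⟨tensorδ X₁ X₂ Y₁ Y₂, tensorμ_tensorδ X₁ X₂ Y₁ Y₂, tensorδ_tensorμ X₁ X₂ Y₁ Y₂⟩

variable {A B : C} (α : A ⟶ 𝟙_ C) (β : B ⟶ 𝟙_ C)

abbrev tensorCounit : A ⊗ B ⟶ 𝟙_ C :=
  (α ⊗ₘ β) ≫ (λ_ (𝟙_ C)).hom

theorem whiskerLeft_tensorCounit_rightUnitor :
    (A ⊗ B) ◁ tensorCounit α β ≫ (ρ_ (A ⊗ B)).hom =
      tensorμ A B A B ≫ ((A ◁ α ≫ (ρ_ A).hom) ⊗ₘ (B ◁ β ≫ (ρ_ B).hom)) := by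
  rw [MonoidalCategory.whiskerLeft_comp, Category.assoc, tensor_right_unitality A B,
    MonoidalCategory.whiskerLeft_hom_inv_assoc, tensorμ_natural_right_assoc,
    tensorHom_comp_tensorHom]

theorem tensorCounit_whiskerRight_leftUnitor :
    tensorCounit α β ▷ (A ⊗ B) ≫ (λ_ (A ⊗ B)).hom =
      tensorμ A B A B ≫ ((α ▷ A ≫ (λ_ A).hom) ⊗ₘ (β ▷ B ≫ (λ_ B).hom)) := by
  rw [MonoidalCategory.comp_whiskerRight, Category.assoc, tensor_left_unitality A B,
    MonoidalCategory.hom_inv_whiskerRight_assoc, tensorμ_natural_left_assoc,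
    tensorHom_comp_tensorHom]

variable {α β}

theorem IsIdempotentPair.tensor (hα : IsIdempotentPair α) (hβ : IsIdempotentPair β) :
    IsIdempotentPair (tensorCounit α β) := by
  obtain ⟨hα_eq, hα_iso⟩ := hα
  obtain ⟨hβ_eq, hβ_iso⟩ := hβ
  refine ⟨?_, ?_⟩
  · rw [whiskerLeft_tensorCounit_rightUnitor, tensorCounit_whiskerRight_leftUnitor, hα_eq, hβ_eq]
  · rw [tensorCounit_whiskerRight_leftUnitor]
    infer_instance

end Braided

theorem stmt15 {D : Type*} [Category D] [MonoidalCategory D] [SymmetricCategory D]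
    {A B : D} (α : A ⟶ 𝟙_ D) (β : B ⟶ 𝟙_ D)
    (hα : IsIdempotentPair α) (hβ : IsIdempotentPair β) :
    IsIdempotentPair ((α ⊗ₘ β) ≫ (λ_ (𝟙_ D)).hom) :=
  hα.tensor hβ
end

section
/- Let D be a symmetric monoidal category with unit O, and let α : A → O be a morphism such that α ⊗ 1_A : A ⊗ A → O ⊗ A is an isomorphism. Then an object E of D lies in the essential image of the functor A ⊗ (−) if and only if the map ι_α(E) := l_E ∘ (α ⊗ 1_E) : A ⊗ E → E is an isomorphism. -/
open CategoryTheory MonoidalCategory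

namespace CategoryTheory.MonoidalCategory

variable {D : Type*} [Category D] [MonoidalCategory D]

lemma isIso_whiskerRight_tensor {A B X : D} (f : A ⟶ B) [IsIso (f ▷ X)] (Y : D) :
    IsIso (f ▷ (X ⊗ Y)) := by
  rw [whiskerRight_tensor]
  infer_instance

lemma isIso_whiskerRight_of_mem_essImage {A B : D} (f : A ⟶ B) [IsIso (f ▷ A)] {E : D}
    (hE : (tensorLeft A).essImage E) : IsIso (f ▷ E) := by
  obtain ⟨F, ⟨e⟩⟩ := hE
  have : IsIso (f ▷ (A ⊗ F)) := isIso_whiskerRight_tensor f F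
  exact (NatTrans.isIso_app_iff_of_iso ((tensoringLeft D).map f) e).mp this

end CategoryTheory.MonoidalCategory

theorem stmt16_general {D : Type*} [Category D] [MonoidalCategory D]
    {A : D} (α : A ⟶ 𝟙_ D) (h : IsIso (α ▷ A)) (E : D) :
    (tensorLeft A).essImage E ↔ IsIso ((α ▷ E) ≫ (λ_ E).hom) := by
  rw [isIso_comp_right_iff]
  refine ⟨isIso_whiskerRight_of_mem_essImage α, fun _ => ?_⟩
  exact ⟨E, ⟨asIso ((α ▷ E) ≫ (λ_ E).hom)⟩⟩

theorem stmt16 {D : Type*} [Category D] [MonoidalCategory D] [SymmetricCategory D]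
    {A : D} (α : A ⟶ 𝟙_ D) (h : IsIso (α ▷ A)) (E : D) :
    (tensorLeft A).essImage E ↔ IsIso ((α ▷ E) ≫ (λ_ E).hom) :=
  stmt16_general α h E
end

section
/- Let S be a commutative noetherian ring with a decent linear topology U (a nonempty filter basis of ideals whose squares are open, making S a topological ring). For an S-module M let Γ'_U(M) = { x ∈ M : Jx = 0 for some open ideal J }. Then Γ'_U commutes with small filtered colimits of S-modules: the natural map colim (Γ'_U ∘ M_•) → Γ'_U(colim M_•) is an isomorphism for every functor M_• from a small filtered category to S-modules. Moreover, if I is an injective S-module then Γ'_U(I) is injective. -/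
open CategoryTheory Limits

/-- A decent (linear) topology on a commutative ring `S`, given by its set of open ideals:
a nonempty collection, upward closed and stable under finite intersections (so the open
ideals form a filter basis of neighborhoods of `0`), in which every open ideal contains an
open ideal whose square is open. -/
structure DecentTopology (S : Type*) [CommRing S] where
  opens : Set (Ideal S)
  nonempty : opens.Nonempty
  upward : ∀ {I J : Ideal S}, I ∈ opens → I ≤ J → J ∈ opens
  inter : ∀ {I J : Ideal S}, I ∈ opens → J ∈ opens → I ⊓ J ∈ opens
  sq_basis : ∀ {I : Ideal S}, I ∈ opens → ∃ J ∈ opens, J ≤ I ∧ J * J ∈ opens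

/-- `Γ'_U(M) = { x ∈ M : Jx = 0 for some open ideal J }`, as a submodule of `M`. -/
def DecentTopology.torsion {S : Type*} [CommRing S] (U : DecentTopology S)
    (M : Type*) [AddCommGroup M] [Module S M] : Submodule S M where
  carrier := {x | ∃ J ∈ U.opens, ∀ a ∈ J, a • x = (0 : M)}
  zero_mem' := by
    obtain ⟨J, hJ⟩ := U.nonempty
    exact ⟨J, hJ, fun a _ => smul_zero a⟩
  add_mem' := by
    rintro x y ⟨J, hJ, hx⟩ ⟨K, hK, hy⟩
    refine ⟨J ⊓ K, U.inter hJ hK, fun a ha => ?_⟩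
    rw [smul_add, hx a ha.1, hy a ha.2, add_zero]
  smul_mem' := by
    rintro c x ⟨J, hJ, hx⟩
    refine ⟨J, hJ, fun a ha => ?_⟩
    rw [smul_comm, hx a ha, smul_zero]

/-- The torsion functor `Γ'_U` on the category of `S`-modules. -/
def DecentTopology.torsionFunctor {S : Type u} [CommRing S] (U : DecentTopology S) :
    ModuleCat.{u} S ⥤ ModuleCat.{u} S where
  obj M := ModuleCat.of S (U.torsion M)
  map {M N} f := ModuleCat.ofHom (f.hom.restrict (by
    rintro x ⟨J, hJ, hx⟩
    exact ⟨J, hJ, fun a ha => by rw [← map_smul, hx a ha, map_zero]⟩))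
  map_id M := by
    ext x
    rfl
  map_comp f g := by
    ext x
    rfl

/-! An element of `Γ'_U(M)` is killed by an open ideal, and open ideals are finitely generated,
so membership in `Γ'_U` is a finite condition; in a filtered colimit it is therefore already
witnessed at a finite stage.

For injectivity we check Baer's criterion. Let `φ : b → Γ'_U(I)` with `b` an ideal. As `b` is
finitely generated, `φ` kills `J • b` for an open ideal `J`, and by Artin–Rees
`J ^ n ⊓ b ≤ J • b` for some `n`. Hence `φ` and `0` glue to a map on `b ⊔ J ^ n`, which extends
to `S` because `I` is injective. The image `y` of `1` is killed by `J ^ n`, which contains an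
open ideal because the topology is decent, so `y ∈ Γ'_U(I)` and `a ↦ a • y` extends `φ`. -/

lemma Module.Baer.exists_smul_eq_of_eq_zero_on_inf {R Q : Type*} [CommRing R] [AddCommGroup Q]
    [Module R Q] (hQ : Module.Baer R Q) {b c : Ideal R} (ψ : b →ₗ[R] Q)
    (hψ : ∀ (x : R) (hx : x ∈ b), x ∈ c → ψ ⟨x, hx⟩ = 0) :
    ∃ y : Q, (∀ a ∈ c, a • y = 0) ∧ ∀ x : b, ψ x = (x : R) • y := by
  let f : R →ₗ.[R] Q := ⟨b, ψ⟩
  let g : R →ₗ.[R] Q := ⟨c, 0⟩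
  have hfg : ∀ (x : f.domain) (y : g.domain), (x : R) = y → f x = g y := by
    rintro ⟨x, hx⟩ ⟨y, hy⟩ (rfl : x = y)
    exact hψ x hx hy
  obtain ⟨h, hh⟩ := hQ _ (f.sup g hfg).toFun
  have h_apply : ∀ x, h x = x • h 1 := fun x => by rw [← map_smul, smul_eq_mul, mul_one]
  refine ⟨h 1, fun a ha => ?_, fun x => ?_⟩
  · rw [← h_apply, hh a (le_sup_right (a := b) ha)]
    exact ((f.right_le_sup g hfg).2 (x := ⟨a, ha⟩) rfl).symm
  · rw [← h_apply, hh x (le_sup_left (b := c) x.2)]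
    exact (f.left_le_sup g hfg).2 (x := x) (y := ⟨x, le_sup_left (b := c) x.2⟩) rfl

namespace CategoryTheory.Limits.Concrete

lemma colimit_rep_eq_zero_of_finset {R : Type u} [Ring R] {J : Type u} [SmallCategory J]
    [IsFiltered J] (F : J ⥤ ModuleCat.{u} R) (j : J) (s : Finset (F.obj j))
    (hs : ∀ x ∈ s, colimit.ι F j x = 0) : ∃ (k : J) (f : j ⟶ k), ∀ x ∈ s, F.map f x = 0 := by
  classical
  induction s using Finset.induction_on with
  | empty => exact ⟨j, 𝟙 j, by simp⟩
  | insert x s _ ih =>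
    obtain ⟨k₁, f₁, h₁⟩ := ih fun y hy => hs y (Finset.mem_insert_of_mem hy)
    obtain ⟨k₂, f₂, h₂⟩ := colimit_rep_eq_zero R F j x (hs x (Finset.mem_insert_self x s))
    obtain ⟨k, g₁, g₂, hg⟩ := IsFiltered.span f₁ f₂
    refine ⟨k, f₁ ≫ g₁, fun y hy => ?_⟩
    rcases Finset.mem_insert.1 hy with rfl | hy
    · rw [hg, F.map_comp, ModuleCat.comp_apply, h₂, map_zero]
    · rw [F.map_comp, ModuleCat.comp_apply, h₁ y hy, map_zero]

end CategoryTheory.Limits.Concrete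

namespace DecentTopology

variable {S : Type u} [CommRing S] (U : DecentTopology S)

lemma mem_torsion_iff {M : Type*} [AddCommGroup M] [Module S M] (x : M) :
    x ∈ U.torsion M ↔ ∃ J ∈ U.opens, J ≤ (Submodule.span S {x}).annihilator := by
  simp only [SetLike.le_def, Submodule.mem_annihilator_span_singleton]
  rfl

lemma exists_open_le_pow {J : Ideal S} (hJ : J ∈ U.opens) (n : ℕ) :
    ∃ K ∈ U.opens, K ≤ J ^ n := by
  suffices h : ∀ m, ∃ K ∈ U.opens, K ≤ J ^ 2 ^ m by
    obtain ⟨K, hK, hKle⟩ := h n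
    exact ⟨K, hK, hKle.trans (Ideal.pow_le_pow_right n.lt_two_pow_self.le)⟩
  intro m
  induction m with
  | zero => exact ⟨J, hJ, by simp⟩
  | succ m ih =>
    obtain ⟨K, hK, hKle⟩ := ih
    obtain ⟨L, -, hLK, hLL⟩ := U.sq_basis hK
    refine ⟨L * L, hLL, ?_⟩
    calc L * L ≤ J ^ 2 ^ m * J ^ 2 ^ m := Ideal.mul_mono (hLK.trans hKle) (hLK.trans hKle)
      _ = J ^ 2 ^ (m + 1) := by rw [← pow_add, pow_succ, mul_two]

lemma exists_open_le_annihilator_of_fg {M : Type*} [AddCommGroup M] [Module S M]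
    {N : Submodule S M} (hN : N.FG) (hNt : N ≤ U.torsion M) :
    ∃ J ∈ U.opens, J ≤ N.annihilator := by
  induction N, hN using Submodule.fg_induction with
  | singleton x => exact (U.mem_torsion_iff x).1 (hNt (Submodule.mem_span_singleton_self x))
  | sup N₁ N₂ _ _ ih₁ ih₂ =>
    obtain ⟨J₁, hJ₁, h₁⟩ := ih₁ (le_sup_left.trans hNt)
    obtain ⟨J₂, hJ₂, h₂⟩ := ih₂ (le_sup_right.trans hNt)
    exact ⟨J₁ ⊓ J₂, U.inter hJ₁ hJ₂, by
      rw [Submodule.annihilator_sup]; exact inf_le_inf h₁ h₂⟩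

lemma baer_torsion [IsNoetherianRing S] {I : Type u} [AddCommGroup I] [Module S I]
    (hI : Module.Baer S I) : Module.Baer S (U.torsion I) := by
  intro b φ
  let ψ : b →ₗ[S] I := (U.torsion I).subtype ∘ₗ φ
  obtain ⟨J, hJ, hJψ⟩ := U.exists_open_le_annihilator_of_fg
    (LinearMap.range_eq_map ψ ▸ Module.Finite.fg_top.map ψ)
    (by rintro _ ⟨y, rfl⟩; exact (φ y).2)
  obtain ⟨k, hk⟩ := Ideal.exists_pow_inf_eq_pow_smul J (b : Submodule S S)
  have hAR : J ^ (k + 1) ⊓ b ≤ J • b := by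
    have := hk (k + 1) k.le_succ
    rw [Ideal.smul_top_eq_map, Algebra.algebraMap_self, Ideal.map_id, Nat.add_sub_cancel_left,
      pow_one] at this
    exact this.le.trans (Submodule.smul_mono le_rfl inf_le_right)
  have hJb : J • b ≤ (LinearMap.ker ψ).map b.subtype := Submodule.smul_le.2 fun r hr n hn =>
    ⟨r • ⟨n, hn⟩, by
      change ψ (r • ⟨n, hn⟩) = 0
      rw [map_smul]
      exact Submodule.mem_annihilator.1 (hJψ hr) _ ⟨_, rfl⟩, rfl⟩
  have hvanish (x : S) (hx : x ∈ b) (hxJ : x ∈ J ^ (k + 1)) : ψ ⟨x, hx⟩ = 0 := by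
    obtain ⟨w, hw, rfl⟩ := hJb (hAR ⟨hxJ, hx⟩)
    exact hw
  obtain ⟨y, hyJ, hψy⟩ := hI.exists_smul_eq_of_eq_zero_on_inf ψ hvanish
  obtain ⟨K, hK, hKJ⟩ := U.exists_open_le_pow hJ (k + 1)
  exact ⟨LinearMap.toSpanSingleton S _ ⟨y, K, hK, fun a ha => hyJ a (hKJ ha)⟩,
    fun x hx => Subtype.ext (hψy ⟨x, hx⟩).symm⟩

section FilteredColimits

variable {J : Type u} [SmallCategory J] (K : J ⥤ ModuleCat.{u} S)

lemma coe_post_ι_apply (j : J) (w : U.torsion (K.obj j)) :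
    (colimit.post K U.torsionFunctor (colimit.ι (K ⋙ U.torsionFunctor) j w)).1 =
      colimit.ι K j w.1 :=
  congrArg Subtype.val (ConcreteCategory.congr_hom (colimit.ι_post K U.torsionFunctor j) w)

variable [IsFiltered J]

lemma post_injective : Function.Injective (colimit.post K U.torsionFunctor) := by
  rw [injective_iff_map_eq_zero]
  intro z hz
  obtain ⟨j, w, rfl⟩ := Concrete.colimit_exists_rep (K ⋙ U.torsionFunctor) z
  obtain ⟨k, f, hf⟩ := Concrete.colimit_rep_eq_zero S K j w.1
    ((U.coe_post_ι_apply K j w).symm.trans (congrArg Subtype.val hz))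
  have hw : (K ⋙ U.torsionFunctor).map f w = 0 := Subtype.ext hf
  rw [← colimit.w_apply (K ⋙ U.torsionFunctor) f w, hw, map_zero]

lemma post_surjective [IsNoetherianRing S] :
    Function.Surjective (colimit.post K U.torsionFunctor) := by
  classical
  rintro ⟨x, hx⟩
  obtain ⟨I, hI, hIx⟩ := (U.mem_torsion_iff x).1 hx
  obtain ⟨t, rfl⟩ : I.FG := IsNoetherian.noetherian I
  obtain ⟨j, y, rfl⟩ := Concrete.colimit_exists_rep K x
  obtain ⟨k, f, hf⟩ := Concrete.colimit_rep_eq_zero_of_finset K j (t.image (· • y)) (by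
    rintro _ hz
    obtain ⟨a, ha, rfl⟩ := Finset.mem_image.1 hz
    rw [map_smul]
    exact (Submodule.mem_annihilator_span_singleton _ _).1 (hIx (Submodule.subset_span ha)))
  have hy : K.map f y ∈ U.torsion (K.obj k) := (U.mem_torsion_iff _).2
    ⟨_, hI, Submodule.span_le.2 fun a ha => (Submodule.mem_annihilator_span_singleton _ _).2 (by
      rw [← map_smul]
      exact hf _ (Finset.mem_image_of_mem _ ha))⟩
  refine ⟨colimit.ι (K ⋙ U.torsionFunctor) k ⟨_, hy⟩, Subtype.ext ?_⟩
  rw [coe_post_ι_apply]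
  exact colimit.w_apply K f y

end FilteredColimits

lemma preservesFilteredColimits_torsionFunctor [IsNoetherianRing S] :
    PreservesFilteredColimits U.torsionFunctor where
  preserves_filtered_colimits _ _ _ := ⟨fun {K} =>
    have : IsIso (colimit.post K U.torsionFunctor) :=
      (ConcreteCategory.isIso_iff_bijective _).2 ⟨U.post_injective K, U.post_surjective K⟩
    preservesColimit_of_isIso_post _ K⟩

lemma injective_torsionFunctor_obj [IsNoetherianRing S] (I : ModuleCat.{u} S) [Injective I] :
    Injective (U.torsionFunctor.obj I) :=
  have hI := Module.injective_module_of_injective_object S I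
  Module.injective_object_of_injective_module
    (inj := (U.baer_torsion (.of_injective hI)).injective)

end DecentTopology

/-- Over a noetherian commutative ring with a decent topology, the torsion functor
`Γ'_U` commutes with small filtered colimits of `S`-modules, and preserves injectivity
of `S`-modules. -/
theorem stmt19 {S : Type u} [CommRing S] [IsNoetherianRing S] (U : DecentTopology S) :
    Nonempty (PreservesFilteredColimits U.torsionFunctor) ∧
      ∀ I : ModuleCat.{u} S, Injective I → Injective (U.torsionFunctor.obj I) :=
  ⟨⟨U.preservesFilteredColimits_torsionFunctor⟩, fun I _ => U.injective_torsionFunctor_obj I⟩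
end
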